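/- arXiv:1208.1373 — 3 statements merged into one kernel-verified Lean document; each statement's English description precedes it below -/
import Mathlib

section
/- Let k be a finite field with q elements, ψ a nontrivial additive character, χ_1,…,χ_n multiplicative characters of k*, W = (w_{ij}) an n×N integer matrix, and suppose there exist integers c_1,…,c_n with ∑_i c_i w_{ij} = 1 for all j (nonconfluence). Let C ∈ GL(n,ℤ) have first row (c_1,…,c_n), set χ'_i = ∏_{m=1}^n χ_m^{c_{im}}, and set w'_{kj} = ∑_i c_{ki} w_{ij} for k = 2,…,n. Then Hyp_ψ(x_1,…,x_N; χ_1,…,χ_n) = ∑_{s_2,…,s_n ∈ k*} χ'_2(s_2)⋯χ'_n(s_n) · ∑_{s_1 ∈ k*} χ'_1(s_1) ψ(s_1 · ∑_{j=1}^N x_j s_2^{w'_{2j}}⋯s_n^{w'_{nj}}), where Hyp_ψ is the GKZ hypergeometric sum ∑_{t∈(k*)^n} χ_1(t_1)⋯χ_n(t_n) ψ(∑_j x_j t_1^{w_{1j}}⋯t_n^{w_{nj}}). -/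
open Finset

private lemma zpow_sum' {G : Type*} [CommGroup G] (x : G) {ι : Type*} (s : Finset ι) (f : ι → ℤ) :
    x ^ (∑ i ∈ s, f i) = ∏ i ∈ s, x ^ f i := by
  induction s using Finset.cons_induction with
  | empty => simp
  | cons a s ha ih => simp [Finset.sum_cons, Finset.prod_cons, zpow_add, ih]

private lemma units_val_prod {M : Type*} [CommMonoid M] {ι : Type*} (s : Finset ι)
    (f : ι → Mˣ) : ((∏ i ∈ s, f i : Mˣ) : M) = ∏ i ∈ s, (f i : M) :=
  map_prod (Units.coeHom M) f s

/-- composition of multiplicative matrix actions on a group power -/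
private lemma comp_lemma {G : Type*} [CommGroup G] {ι κ : Type*} [Fintype ι] [Fintype κ]
    (A : Matrix ι κ ℤ) (B : κ → ℤ) (u : ι → G) :
    ∏ i : κ, (∏ m, u m ^ A m i) ^ B i = ∏ m, u m ^ (∑ i, A m i * B i) := by
  simp_rw [← Finset.prod_zpow, ← zpow_mul]
  rw [Finset.prod_comm]
  simp_rw [zpow_sum']

private lemma char_prod_apply {k : Type*} [CommMonoidWithZero k] {ι : Type*} (s : Finset ι)
    (χ : ι → MulChar k ℂ) (c : ι → ℤ) (a : kˣ) :
    (∏ l ∈ s, χ l ^ c l) (a : k) = ∏ l ∈ s, (χ l (a : k)) ^ c l := by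
  have h1 : (∏ l ∈ s, χ l ^ c l) (a : k)
      = ((MulChar.mulEquivToUnitHom (∏ l ∈ s, χ l ^ c l)) a : ℂ) :=
    (MulChar.coe_equivToUnitHom _ _).symm
  rw [h1, map_prod]
  have h2 : ∀ l, (MulChar.mulEquivToUnitHom (χ l ^ c l)) a
      = (MulChar.mulEquivToUnitHom (χ l)) a ^ c l := by
    intro l; rw [map_zpow]; rfl
  simp_rw [MonoidHom.finset_prod_apply, h2]
  rw [units_val_prod]
  refine Finset.prod_congr rfl fun l _ => ?_
  rw [Units.val_zpow_eq_zpow_val]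
  exact congrArg (· ^ c l) (MulChar.coe_equivToUnitHom _ _)

private lemma char_apply_prod {k : Type*} [CommMonoidWithZero k] {ι : Type*} [Fintype ι]
    (χ : MulChar k ℂ) (c : ι → ℤ) (u : ι → kˣ) :
    χ ((∏ m, u m ^ c m : kˣ) : k) = ∏ m, (χ (u m : k)) ^ c m := by
  have h1 : χ ((∏ m, u m ^ c m : kˣ) : k)
      = ((MulChar.mulEquivToUnitHom χ) (∏ m, u m ^ c m) : ℂ) :=
    (MulChar.coe_equivToUnitHom _ _).symm
  rw [h1, map_prod]
  simp_rw [map_zpow]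
  rw [units_val_prod]
  refine Finset.prod_congr rfl fun l _ => ?_
  rw [Units.val_zpow_eq_zpow_val]
  exact congrArg (· ^ c l) (MulChar.coe_equivToUnitHom _ _)

/-- Change of variables for the GKZ hypergeometric sum under the nonconfluence
condition: with C ∈ GL(n+1,ℤ) whose first row (c₀,…,cₙ) satisfies ∑ᵢ cᵢ w_{ij} = 1,
setting χ'ᵢ = ∏ₗ χₗ^{C i l} and w'_{kj} = ∑ᵢ C k i w_{ij}, the sum Hyp_ψ(x;χ)
factors through a pure Gauss-type inner sum over s₁. -/
theorem stmt11 {k : Type*} [Field k] [Fintype k] [DecidableEq k]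
    (n N : ℕ) (ψ : AddChar k ℂ) (hψ : ψ ≠ 1)
    (χ : Fin (n + 1) → MulChar k ℂ)
    (W : Matrix (Fin (n + 1)) (Fin N) ℤ)
    (C : Matrix (Fin (n + 1)) (Fin (n + 1)) ℤ)
    (hC : IsUnit C.det)
    (hrow : ∀ j, ∑ i, C 0 i * W i j = 1)
    (x : Fin N → k) :
    (∑ t : Fin (n + 1) → kˣ, (∏ i, χ i (t i : k)) *
        ψ (∑ j, x j * ∏ i, ((t i ^ W i j : kˣ) : k)))
      =
    ∑ s : Fin n → kˣ,
      (∏ m : Fin n, (∏ l, χ l ^ C m.succ l) (s m : k)) *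
      ∑ s₁ : kˣ,
        (∏ l, χ l ^ C 0 l) (s₁ : k) *
        ψ ((s₁ : k) * ∑ j, x j *
            ∏ m : Fin n, ((s m ^ (∑ i, C m.succ i * W i j) : kˣ) : k)) := by
  classical
  -- the multiplicative change of variables given by C
  have hCD : C * C⁻¹ = 1 := Matrix.mul_nonsing_inv C hC
  have hDC : C⁻¹ * C = 1 := Matrix.nonsing_inv_mul C hC
  have inv_aux : ∀ (A B : Matrix (Fin (n+1)) (Fin (n+1)) ℤ), A * B = 1 →
      ∀ u : Fin (n+1) → kˣ, (fun l => ∏ i, (fun l' => ∏ m, u m ^ A m l') i ^ B i l) = u := by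
    intro A B hAB u
    funext l
    simp only
    rw [comp_lemma]
    have : ∀ m, (∑ i, A m i * B i l) = (1 : Matrix (Fin (n+1)) (Fin (n+1)) ℤ) m l := by
      intro m; rw [← hAB, Matrix.mul_apply]
    simp_rw [this, Matrix.one_apply]
    rw [Finset.prod_congr rfl (fun m _ => by
      rw [show (u m ^ (if m = l then (1:ℤ) else 0)) = if m = l then u m else 1 by
        split <;> simp [*]])]
    simp
  let e : (Fin (n+1) → kˣ) ≃ (Fin (n+1) → kˣ) :=
    { toFun := fun u l => ∏ m, u m ^ C m l
      invFun := fun u l => ∏ m, u m ^ C⁻¹ m l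
      left_inv := fun u => inv_aux C C⁻¹ hCD u
      right_inv := fun u => inv_aux C⁻¹ C hDC u }
  rw [← Equiv.sum_comp e]
  rw [← Equiv.sum_comp (Fin.consEquiv fun _ : Fin (n+1) => kˣ), Fintype.sum_prod_type]
  rw [Finset.sum_comm]
  refine Finset.sum_congr rfl fun s _ => ?_
  rw [Finset.mul_sum]
  refine Finset.sum_congr rfl fun s₁ _ => ?_
  set u : Fin (n+1) → kˣ := Fin.cons s₁ s with hudef
  have he : ∀ l, e ((Fin.consEquiv fun _ : Fin (n+1) => kˣ) (s₁, s)) l = ∏ m, u m ^ C m l := by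
    intro l; rfl
  simp only [he]
  -- character part
  have hchar : (∏ i, χ i ((∏ m, u m ^ C m i : kˣ) : k))
      = ((∏ l, χ l ^ C 0 l) (s₁ : k)) * ∏ m : Fin n, (∏ l, χ l ^ C m.succ l) (s m : k) := by
    simp_rw [char_apply_prod, char_prod_apply]
    rw [Finset.prod_comm, Fin.prod_univ_succ]
    simp [hudef]
  -- exponent part
  have hexp : ∀ j, (∏ i, ((∏ m, u m ^ C m i : kˣ) ^ W i j : kˣ))
      = s₁ * ∏ m : Fin n, s m ^ (∑ i, C m.succ i * W i j) := by
    intro j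
    rw [comp_lemma C (fun i => W i j) u, Fin.prod_univ_succ]
    simp [hudef, hrow j]
  have hψarg : (∑ j, x j * ∏ i, (((∏ m, u m ^ C m i : kˣ) ^ W i j : kˣ) : k))
      = (s₁ : k) * ∑ j, x j * ∏ m : Fin n, ((s m ^ (∑ i, C m.succ i * W i j) : kˣ) : k) := by
    rw [Finset.mul_sum]
    refine Finset.sum_congr rfl fun j _ => ?_
    have : ∏ i, (((∏ m, u m ^ C m i : kˣ) ^ W i j : kˣ) : k)
        = ((∏ i, ((∏ m, u m ^ C m i : kˣ) ^ W i j : kˣ) : kˣ) : k) :=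
      (units_val_prod _ _).symm
    rw [this, hexp j, Units.val_mul, units_val_prod]
    ring
  rw [hchar, hψarg]
  ring
end

section
/- Let k be a finite field, ψ a nontrivial additive character, and χ'_1 a nontrivial multiplicative character of k*. Suppose the nonconfluence condition holds for the matrix (w_{ij}) with witness (c_1,…,c_n) and C ∈ GL(n,ℤ) as above, with all transformed values ∑_j x_j s_2^{w'_{2j}}⋯s_n^{w'_{nj}} nonzero for every (s_2,…,s_n) ∈ (k*)^{n-1}. Then the GKZ hypergeometric sum factors as Hyp_ψ(x; χ_1,…,χ_n) = g(χ'_1,ψ) · ∑_{s_2,…,s_n ∈ k*} χ'_2(s_2)⋯χ'_n(s_n) χ'_1^{-1}(∑_j x_j s_2^{w'_{2j}}⋯s_n^{w'_{nj}}), where g(χ'_1,ψ) is the Gauss sum. -/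
/-!
Substitute `t = u ^ C`, i.e. `tᵢ = ∏ₘ uₘ ^ Cₘᵢ`, which is a bijection of the torus `(k*)ⁿ⁺¹` because
`C` is invertible over `ℤ`. The character becomes `∏ₘ χ'ₘ(uₘ)`, and the monomials become
`u ^ (C W)`; since the first row of `C W` is all ones, the argument of `ψ` becomes
`u₀ · G(u₁, …, uₙ)`. For fixed `u₁, …, uₙ` the sum over `u₀` is then the Gauss sum of `χ'₁`
against the additive character `a ↦ ψ(a G)`, which is `χ'₁⁻¹(G) g(χ'₁, ψ)` because `G ≠ 0`.
-/

open Finset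

section MonomialMap

variable {G : Type*} [CommGroup G] {ι κ ν : Type*} [Fintype ι]

lemma zpow_finset_sum {α : Type*} (a : G) (s : Finset α) (f : α → ℤ) :
    a ^ (∑ i ∈ s, f i) = ∏ i ∈ s, a ^ f i :=
  map_sum (zmultiplesHom (Additive G) (Additive.ofMul a)) f s

def monomialMap (A : Matrix ι κ ℤ) (u : ι → G) : κ → G :=
  fun j => ∏ i, u i ^ A i j

lemma monomialMap_monomialMap [Fintype κ] (A : Matrix ι κ ℤ) (B : Matrix κ ν ℤ) (u : ι → G) :
    monomialMap B (monomialMap A u) = monomialMap (A * B) u := by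
  funext l
  simp only [monomialMap, ← Finset.prod_zpow, ← zpow_mul, Matrix.mul_apply, zpow_finset_sum]
  exact Finset.prod_comm

lemma monomialMap_one [DecidableEq ι] (u : ι → G) : monomialMap (1 : Matrix ι ι ℤ) u = u := by
  funext i
  rw [monomialMap, Finset.prod_eq_single i (fun m _ hm => by simp [Matrix.one_apply_ne hm])
    (by simp)]
  simp

def monomialEquiv [DecidableEq ι] (A : Matrix ι ι ℤ) [Invertible A] : (ι → G) ≃ (ι → G) where
  toFun := monomialMap A
  invFun := monomialMap ⅟A
  left_inv u := by rw [monomialMap_monomialMap, mul_invOf_self, monomialMap_one]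
  right_inv u := by rw [monomialMap_monomialMap, invOf_mul_self, monomialMap_one]

lemma monomialMap_cons {n : ℕ} (A : Matrix (Fin (n + 1)) κ ℤ) (hA : ∀ j, A 0 j = 1)
    (a : G) (s : Fin n → G) (j : κ) :
    monomialMap A (Fin.cons a s) j = a * monomialMap (A.submatrix Fin.succ id) s j := by
  simp [monomialMap, Fin.prod_univ_succ, hA]

end MonomialMap

namespace MulChar

variable {R R' : Type*} [CommRing R']

lemma prod_apply_units [CommMonoid R] {ι : Type*} (s : Finset ι) (χ : ι → MulChar R R')
    (a : Rˣ) : (∏ i ∈ s, χ i) a = ∏ i ∈ s, χ i a := by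
  induction s using Finset.cons_induction with
  | empty => simp
  | cons i s hi ih => rw [prod_cons, prod_cons, mul_apply, ih]

lemma prod_apply_monomialMap [CommGroupWithZero R] {ι κ : Type*} [Fintype ι] [Fintype κ]
    (χ : κ → MulChar R R') (A : Matrix ι κ ℤ) (u : ι → Rˣ) :
    ∏ j, χ j ((monomialMap A u j : Rˣ) : R) = ∏ i, (∏ j, χ j ^ A i j) (u i : R) := by
  simp only [monomialMap, Units.coe_prod, map_prod, prod_apply_units, zpow_apply_coe]
  exact Finset.prod_comm

end MulChar

lemma sum_units_mulChar_mul_addChar_mul {R R' : Type*} [CommRing R] [Fintype R] [DecidableEq R]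
    [CommRing R'] (χ : MulChar R R') (ψ : AddChar R R') (a : Rˣ) :
    ∑ u : Rˣ, χ u * ψ (u * a) = χ⁻¹ a * ∑ u : Rˣ, χ u * ψ u := by
  rw [← Equiv.sum_comp (Equiv.mulRight a⁻¹), Finset.mul_sum]
  refine Finset.sum_congr rfl fun u _ => ?_
  rw [Equiv.coe_mulRight, Units.val_mul, mul_assoc, Units.inv_mul, mul_one, map_mul,
    MulChar.inv_apply, Ring.inverse_unit]
  ring

lemma Fintype.sum_fin_succ_pi {α M : Type*} [Fintype α] [AddCommMonoid M] {n : ℕ}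
    (f : (Fin (n + 1) → α) → M) : ∑ u, f u = ∑ a, ∑ s : Fin n → α, f (Fin.cons a s) := by
  rw [← (Fin.consEquiv fun _ => α).sum_comp, Fintype.sum_prod_type]
  rfl

theorem stmt12_general {k : Type*} [Field k] [Fintype k] [DecidableEq k]
    (n N : ℕ) (ψ : AddChar k ℂ)
    (χ : Fin (n + 1) → MulChar k ℂ)
    (W : Matrix (Fin (n + 1)) (Fin N) ℤ)
    (C : Matrix (Fin (n + 1)) (Fin (n + 1)) ℤ)
    (hC : IsUnit C.det)
    (hrow : ∀ j, ∑ i, C 0 i * W i j = 1)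
    (x : Fin N → k)
    (hG : ∀ s : Fin n → kˣ,
      (∑ j, x j * ∏ m : Fin n, ((s m ^ (∑ i, C m.succ i * W i j) : kˣ) : k)) ≠ 0) :
    (∑ t : Fin (n + 1) → kˣ, (∏ i, χ i (t i : k)) *
        ψ (∑ j, x j * ∏ i, ((t i ^ W i j : kˣ) : k)))
      =
    (∑ u : kˣ, (∏ l, χ l ^ C 0 l) (u : k) * ψ (u : k)) *
    ∑ s : Fin n → kˣ,
      (∏ m : Fin n, (∏ l, χ l ^ C m.succ l) (s m : k)) *
      (∏ l, χ l ^ C 0 l)⁻¹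
        (∑ j, x j * ∏ m : Fin n, ((s m ^ (∑ i, C m.succ i * W i j) : kˣ) : k)) := by
  have := C.invertibleOfIsUnitDet hC
  set χ' : Fin (n + 1) → MulChar k ℂ := fun m => ∏ l, χ l ^ C m l
  set G : (Fin n → kˣ) → k :=
    fun s => ∑ j, x j * ((monomialMap ((C * W).submatrix Fin.succ id) s j : kˣ) : k)
  have hG_eq (s : Fin n → kˣ) :
      ∑ j, x j * ∏ m : Fin n, ((s m ^ (∑ i, C m.succ i * W i j) : kˣ) : k) = G s := by
    simp [G, monomialMap, Matrix.mul_apply, Units.coe_prod]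
  have hrow' : ∀ j, (C * W) 0 j = 1 := by simpa [Matrix.mul_apply] using hrow
  have hphase (a : kˣ) (s : Fin n → kˣ) :
      ∑ j, x j * ((monomialMap W (monomialMap C (Fin.cons a s)) j : kˣ) : k) = a * G s := by
    simp only [monomialMap_monomialMap, monomialMap_cons (C * W) hrow']
    simp [G, Finset.mul_sum, mul_left_comm]
  calc _ = ∑ u, (∏ i, χ i ((monomialMap C u i : kˣ) : k)) *
        ψ (∑ j, x j * ((monomialMap W (monomialMap C u) j : kˣ) : k)) := by
        rw [← (monomialEquiv C).sum_comp]
        simp only [monomialEquiv, Equiv.coe_fn_mk, monomialMap, Units.coe_prod]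
    _ = ∑ a : kˣ, ∑ s : Fin n → kˣ,
        χ' 0 a * (∏ m, χ' m.succ (s m)) * ψ (a * G s) := by
        simp only [MulChar.prod_apply_monomialMap, Fintype.sum_fin_succ_pi, Fin.prod_univ_succ,
          Fin.cons_zero, Fin.cons_succ, hphase, χ']
    _ = (∑ u : kˣ, χ' 0 u * ψ u) * ∑ s, (∏ m, χ' m.succ (s m)) * (χ' 0)⁻¹ (G s) := by
        rw [Finset.sum_comm, Finset.mul_sum]
        refine Finset.sum_congr rfl fun s _ => ?_
        have htwist : ∑ a : kˣ, χ' 0 a * ψ (a * G s) =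
            (χ' 0)⁻¹ (G s) * ∑ u : kˣ, χ' 0 u * ψ u := by
          simpa using
            sum_units_mulChar_mul_addChar_mul (χ' 0) ψ (Units.mk0 (G s) (hG_eq s ▸ hG s))
        rw [mul_left_comm, mul_comm _ ((χ' 0)⁻¹ (G s)), ← htwist, Finset.mul_sum]
        exact Finset.sum_congr rfl fun a _ => by ring
    _ = _ := by simp only [hG_eq, χ']

/-- Under the nonconfluence condition, if the transformed Laurent polynomial
G(s₂,…,sₙ) = ∑ⱼ xⱼ s₂^{w'₂ⱼ}⋯sₙ^{w'ₙⱼ} never vanishes on the torus and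
χ'₁ = ∏ₗ χₗ^{c_l} is nontrivial, then the GKZ hypergeometric sum factors as the
Gauss sum g(χ'₁,ψ) times a purely multiplicative character sum. -/
theorem stmt12 {k : Type*} [Field k] [Fintype k] [DecidableEq k]
    (n N : ℕ) (ψ : AddChar k ℂ) (hψ : ψ ≠ 1)
    (χ : Fin (n + 1) → MulChar k ℂ)
    (W : Matrix (Fin (n + 1)) (Fin N) ℤ)
    (C : Matrix (Fin (n + 1)) (Fin (n + 1)) ℤ)
    (hC : IsUnit C.det)
    (hrow : ∀ j, ∑ i, C 0 i * W i j = 1)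
    (hχ'₁ : (∏ l, χ l ^ C 0 l) ≠ 1)
    (x : Fin N → k)
    (hG : ∀ s : Fin n → kˣ,
      (∑ j, x j * ∏ m : Fin n, ((s m ^ (∑ i, C m.succ i * W i j) : kˣ) : k)) ≠ 0) :
    (∑ t : Fin (n + 1) → kˣ, (∏ i, χ i (t i : k)) *
        ψ (∑ j, x j * ∏ i, ((t i ^ W i j : kˣ) : k)))
      =
    (∑ u : kˣ, (∏ l, χ l ^ C 0 l) (u : k) * ψ (u : k)) *
    ∑ s : Fin n → kˣ,
      (∏ m : Fin n, (∏ l, χ l ^ C m.succ l) (s m : k)) *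
      (∏ l, χ l ^ C 0 l)⁻¹
        (∑ j, x j * ∏ m : Fin n, ((s m ^ (∑ i, C m.succ i * W i j) : kˣ) : k)) :=
  stmt12_general n N ψ χ W C hC hrow x hG
end

section
/- Let δ ⊂ ℝ^n be a rational convex polyhedral cone of dimension n. For a face τ of δ, let cone_δ(τ) be the cone generated by u′−u with u′ ∈ δ, u ∈ τ, and let (cone_δ(τ))^∨ ⊂ (ℝ^n)* be its dual cone. Then (cone_δ(τ))^∨ = δ̌ ∩ τ^⊥, where δ̌ is the dual cone of δ and τ^⊥ = {φ ∈ (ℝ^n)* : φ|_τ = 0}; moreover the map τ ↦ (cone_δ(τ))^∨ is an inclusion-reversing bijection between the faces of δ and the faces of δ̌. -/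
open Finset

/-- The standard pairing between ℝⁿ and its dual (identified with ℝⁿ). -/
def dotR {n : ℕ} (φ v : Fin n → ℝ) : ℝ := ∑ i, φ i * v i

/-- The dual cone of a subset of ℝⁿ. -/
def dualCone {n : ℕ} (s : Set (Fin n → ℝ)) : Set (Fin n → ℝ) :=
  {φ | ∀ v ∈ s, 0 ≤ dotR φ v}

/-- The annihilator {φ : φ|_s = 0} of a subset of ℝⁿ. -/
def perpSet {n : ℕ} (s : Set (Fin n → ℝ)) : Set (Fin n → ℝ) :=
  {φ | ∀ v ∈ s, dotR φ v = 0}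

/-- The faces of a closed convex cone δ: the subsets cut out on δ by supporting
functionals φ ∈ δ̌ (this includes δ itself, via φ = 0). -/
def facesOf {n : ℕ} (δ : Set (Fin n → ℝ)) : Set (Set (Fin n → ℝ)) :=
  {F | ∃ φ ∈ dualCone δ, F = {v ∈ δ | dotR φ v = 0}}

/-!
A finitely generated cone `δ` is closed: by the conic Carathéodory theorem it is a finite union of
cones on linearly independent vectors, each a linear image of a closed orthant. Hence `δ̌̌ = δ`
by Farkas' lemma.

For the face `τ = δ ∩ φ^⊥`, a functional `ψ ∈ δ̌` vanishes on `τ` iff it vanishes on the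
generators lying in `τ`, i.e. iff it vanishes on their sum `w ∈ δ`; so `δ̌ ∩ τ^⊥` is the face of
`δ̌` cut out by `w`. Conversely, a face of `δ̌` is cut out by some `w ∈ δ̌̌ = δ`, and it is the
dual face of the face of `δ` cut out by a relative interior point `φ` of it. Finally, a face is
recovered from its dual face as `δ ∩ (δ̌ ∩ τ^⊥)^⊥`, which gives injectivity.
-/
namespace PointedCone

variable {E : Type*} [AddCommGroup E] [Module ℝ E]

lemma mem_hull_finset_iff {G : Finset E} {x : E} :
    x ∈ hull ℝ (G : Set E) ↔ ∃ c : E → ℝ, (∀ g ∈ G, 0 ≤ c g) ∧ ∑ g ∈ G, c g • g = x := by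
  constructor
  · intro hx
    obtain ⟨c, -, rfl⟩ := Submodule.mem_span_finset.mp hx
    exact ⟨fun g => c g, fun g _ => (c g).2, rfl⟩
  · rintro ⟨c, hc, rfl⟩
    exact Submodule.sum_mem _ fun g hg => smul_mem _ (hc g hg) (subset_hull hg)

lemma coe_hull_finset (G : Finset E) :
    (hull ℝ (G : Set E) : Set E) =
      {x | ∃ c : E → ℝ, (∀ g, 0 ≤ c g) ∧ x = ∑ g ∈ G, c g • g} := by
  ext x
  constructor
  · intro hx
    obtain ⟨c, -, rfl⟩ := Submodule.mem_span_finset.mp hx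
    exact ⟨fun g => c g, fun g => (c g).2, rfl⟩
  · rintro ⟨c, hc, rfl⟩
    exact mem_hull_finset_iff.mpr ⟨c, fun g _ => hc g, rfl⟩

lemma exists_mem_hull_erase_of_not_linearIndepOn [DecidableEq E] {G : Finset E}
    (hG : ¬ LinearIndepOn ℝ id (G : Set E)) {x : E} (hx : x ∈ hull ℝ (G : Set E)) :
    ∃ g₀ ∈ G, x ∈ hull ℝ (G.erase g₀ : Set E) := by
  obtain ⟨c, hc, rfl⟩ := mem_hull_finset_iff.mp hx
  obtain ⟨e, he, hpos⟩ : ∃ e : E → ℝ, ∑ g ∈ G, e g • g = 0 ∧ ∃ g ∈ G, 0 < e g := by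
    obtain ⟨e, he, i, hi, hei⟩ := not_linearIndepOn_finset_iff.mp hG
    rcases hei.lt_or_gt with hneg | hpos
    · exact ⟨-e, by simpa [neg_smul] using he, i, hi, by simpa using hneg⟩
    · exact ⟨e, he, i, hi, hpos⟩
  obtain ⟨g₀, hg₀, hmin⟩ := Finset.exists_min_image {g ∈ G | 0 < e g} (fun g => c g / e g)
    (by simpa [Finset.Nonempty] using hpos)
  rw [Finset.mem_filter] at hg₀
  -- the largest multiple of the relation `e` that can be subtracted from `c` within the cone
  set t := c g₀ / e g₀
  have hc' : ∀ g ∈ G, 0 ≤ c g - t * e g := by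
    intro g hg
    rcases le_or_gt (e g) 0 with heg | heg
    · nlinarith [hc g hg, div_nonneg (hc g₀ hg₀.1) hg₀.2.le]
    · have := hmin g (Finset.mem_filter.mpr ⟨hg, heg⟩)
      linarith [(le_div_iff₀ heg).mp this]
  have hsum : ∑ g ∈ G, (c g - t * e g) • g = ∑ g ∈ G, c g • g := by
    simp only [sub_smul, mul_smul, Finset.sum_sub_distrib, ← Finset.smul_sum, he, smul_zero,
      sub_zero]
  refine ⟨g₀, hg₀.1, mem_hull_finset_iff.mpr ⟨fun g => c g - t * e g,
    fun g hg => hc' g (Finset.mem_of_mem_erase hg), ?_⟩⟩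
  rw [Finset.sum_erase _ (by simp [t, div_mul_cancel₀ _ hg₀.2.ne']), hsum]

lemma exists_linearIndepOn_of_mem_hull {G : Finset E} {x : E} (hx : x ∈ hull ℝ (G : Set E)) :
    ∃ S ⊆ G, LinearIndepOn ℝ id (S : Set E) ∧ x ∈ hull ℝ (S : Set E) := by
  classical
  induction G using Finset.strongInduction with
  | H G ih =>
    by_cases hG : LinearIndepOn ℝ id (G : Set E)
    · exact ⟨G, subset_rfl, hG, hx⟩
    obtain ⟨g₀, hg₀, hx'⟩ := exists_mem_hull_erase_of_not_linearIndepOn hG hx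
    obtain ⟨S, hSG, hS, hxS⟩ := ih _ (Finset.erase_ssubset hg₀) hx'
    exact ⟨S, hSG.trans (Finset.erase_subset _ _), hS, hxS⟩

variable [TopologicalSpace E] [IsTopologicalAddGroup E] [ContinuousSMul ℝ E] [T2Space E]

lemma isClosed_hull_of_linearIndepOn {S : Finset E} (hS : LinearIndepOn ℝ id (S : Set E)) :
    IsClosed (hull ℝ (S : Set E) : Set E) := by
  classical
  let L := Fintype.linearCombination ℝ (fun g : (S : Set E) => (g : E))
  have hL : Topology.IsClosedEmbedding L := LinearMap.isClosedEmbedding_of_injective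
    (LinearMap.ker_eq_bot.mpr hS.fintypeLinearCombination_injective)
  have himage : (hull ℝ (S : Set E) : Set E) = L '' Set.Ici 0 := by
    ext x
    simp only [SetLike.mem_coe, mem_hull_finset_iff, Set.mem_image, Set.mem_Ici,
      Fintype.linearCombination_apply, L]
    constructor
    · rintro ⟨c, hc, rfl⟩
      exact ⟨fun g => c g, fun g => hc g g.2, Finset.sum_coe_sort S (fun g => c g • g)⟩
    · rintro ⟨c, hc, rfl⟩
      refine ⟨fun g => if h : g ∈ S then c ⟨g, h⟩ else 0,
        fun g hg => by simpa [hg] using hc ⟨g, hg⟩, ?_⟩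
      rw [← Finset.sum_coe_sort S]
      exact Finset.sum_congr rfl fun g _ => by simp
  rw [himage]
  exact hL.isClosedMap _ isClosed_Ici

lemma isClosed_hull_finset (G : Finset E) : IsClosed (hull ℝ (G : Set E) : Set E) := by
  classical
  have : (hull ℝ (G : Set E) : Set E) =
      ⋃ S ∈ {S : Finset E | S ⊆ G ∧ LinearIndepOn ℝ id (S : Set E)},
        (hull ℝ (S : Set E) : Set E) := by
    ext x
    simp only [SetLike.mem_coe, Set.mem_iUnion, exists_prop]
    constructor
    · intro hx
      obtain ⟨S, hSG, hS, hxS⟩ := exists_linearIndepOn_of_mem_hull hx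
      exact ⟨S, ⟨hSG, hS⟩, hxS⟩
    · rintro ⟨S, ⟨hSG, -⟩, hxS⟩
      exact Submodule.span_mono hSG hxS
  rw [this]
  exact Set.Finite.isClosed_biUnion
    (G.powerset.finite_toSet.subset fun S hS => Finset.mem_powerset.mpr hS.1)
    fun S hS => isClosed_hull_of_linearIndepOn hS.2

end PointedCone

open PointedCone Pointwise Matrix

section Duality

variable {n : ℕ}

lemma dotR_eq_dotProduct (φ v : Fin n → ℝ) : dotR φ v = φ ⬝ᵥ v := rfl

lemma dotR_comm (φ v : Fin n → ℝ) : dotR φ v = dotR v φ := dotProduct_comm φ v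

lemma subset_dualCone_dualCone (s : Set (Fin n → ℝ)) : s ⊆ dualCone (dualCone s) :=
  fun v hv φ hφ => dotR_comm φ v ▸ hφ v hv

lemma dualCone_dualCone_subset_of_isClosed {C : PointedCone ℝ (Fin n → ℝ)}
    (hC : IsClosed (C : Set (Fin n → ℝ))) : dualCone (dualCone (C : Set (Fin n → ℝ))) ⊆ C := by
  intro w hw
  by_contra hwC
  obtain ⟨f, hfC, hfw⟩ := ProperCone.hyperplane_separation_point ⟨C, hC⟩ hwC
  set φ : Fin n → ℝ := fun i => f fun j => if i = j then 1 else 0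
  have hf : ∀ v, f v = dotR φ v := fun v => by
    rw [dotR_eq_dotProduct, dotProduct_comm]
    exact LinearMap.pi_apply_eq_sum_univ (f : (Fin n → ℝ) →ₗ[ℝ] ℝ) v
  have hφ : φ ∈ dualCone (C : Set (Fin n → ℝ)) := fun v hv => hf v ▸ hfC v hv
  have := hw φ hφ
  rw [dotR_comm, ← hf] at this
  linarith

lemma perpSet_anti {s t : Set (Fin n → ℝ)} (h : s ⊆ t) : perpSet t ⊆ perpSet s :=
  fun _ hφ v hv => hφ v (h hv)

lemma dualCone_sub_eq_inter_perpSet {δ τ : Set (Fin n → ℝ)} (h0 : (0 : Fin n → ℝ) ∈ τ)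
    (hτ : τ ⊆ δ) : dualCone (δ - τ) = dualCone δ ∩ perpSet τ := by
  ext ψ
  simp only [dualCone, perpSet, Set.mem_sub, Set.mem_inter_iff, Set.mem_ofPred_eq,
    forall_exists_index, and_imp, dotR_eq_dotProduct]
  constructor
  · intro hψ
    have hδ : ∀ v ∈ δ, 0 ≤ ψ ⬝ᵥ v := fun v hv => by simpa using hψ _ v hv 0 h0 rfl
    refine ⟨hδ, fun u hu => le_antisymm ?_ (hδ u (hτ hu))⟩
    simpa using hψ _ 0 (hτ h0) u hu rfl
  · rintro ⟨hδ, hψτ⟩ _ u' hu' u hu rfl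
    simpa [dotProduct_sub, hψτ u hu] using hδ u' hu'

lemma subset_of_mem_facesOf {δ τ : Set (Fin n → ℝ)} (hτ : τ ∈ facesOf δ) : τ ⊆ δ := by
  obtain ⟨φ, -, rfl⟩ := hτ
  exact fun v hv => hv.1

lemma zero_mem_of_mem_facesOf {δ τ : Set (Fin n → ℝ)} (h0 : (0 : Fin n → ℝ) ∈ δ)
    (hτ : τ ∈ facesOf δ) : (0 : Fin n → ℝ) ∈ τ := by
  obtain ⟨φ, -, rfl⟩ := hτ
  exact ⟨h0, dotProduct_zero φ⟩

lemma eq_inter_perpSet_of_mem_facesOf {δ σ : Set (Fin n → ℝ)} (hσ : σ ∈ facesOf δ) :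
    σ = δ ∩ perpSet (dualCone δ ∩ perpSet σ) := by
  obtain ⟨φ, hφ, rfl⟩ := hσ
  ext v
  refine ⟨fun hv => ⟨hv.1, fun ψ hψ => dotR_comm v ψ ▸ hψ.2 v hv⟩, fun hv => ⟨hv.1, ?_⟩⟩
  exact dotR_comm v φ ▸ hv.2 φ ⟨hφ, fun u hu => hu.2⟩

lemma injOn_dualCone_inter_perpSet (δ : Set (Fin n → ℝ)) :
    Set.InjOn (fun σ => dualCone δ ∩ perpSet σ) (facesOf δ) := by
  intro σ₁ h₁ σ₂ h₂ heq
  rw [eq_inter_perpSet_of_mem_facesOf h₁, eq_inter_perpSet_of_mem_facesOf h₂]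
  exact congrArg _ (congrArg _ heq)

end Duality

section FinitelyGenerated

variable {n : ℕ} {G : Finset (Fin n → ℝ)} {δ : Set (Fin n → ℝ)}

/-- Each point of the face cut out by `φ` is a nonnegative combination of generators, and only
generators on which `φ` vanishes can occur in it. -/
lemma mem_perpSet_face_iff (hδ : δ = hull ℝ (G : Set (Fin n → ℝ))) {φ ψ : Fin n → ℝ}
    (hφ : φ ∈ dualCone δ) :
    ψ ∈ perpSet {v ∈ δ | dotR φ v = 0} ↔ ∀ g ∈ G, dotR φ g = 0 → dotR ψ g = 0 := by
  subst hδ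
  refine ⟨fun hψ g hg hφg => hψ g ⟨subset_hull hg, hφg⟩, ?_⟩
  rintro hψ v ⟨hv, hφv⟩
  obtain ⟨c, hc, rfl⟩ := mem_hull_finset_iff.mp hv
  simp only [dotR_eq_dotProduct, dotProduct_sum, dotProduct_smul, smul_eq_mul] at hφv hψ ⊢
  have hterm := (Finset.sum_eq_zero_iff_of_nonneg fun g hg =>
    mul_nonneg (hc g hg) (hφ g (subset_hull hg))).mp hφv
  refine Finset.sum_eq_zero fun g hg => ?_
  rcases mul_eq_zero.mp (hterm g hg) with hcg | hφg
  · rw [hcg, zero_mul]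
  · rw [hψ g hg hφg, mul_zero]

lemma mapsTo_dualCone_inter_perpSet (hδ : δ = hull ℝ (G : Set (Fin n → ℝ))) :
    Set.MapsTo (fun σ => dualCone δ ∩ perpSet σ) (facesOf δ) (facesOf (dualCone δ)) := by
  classical
  rintro _ ⟨φ, hφ, rfl⟩
  have hGδ : ∀ g ∈ G, g ∈ δ := fun g hg => hδ ▸ subset_hull hg
  refine ⟨∑ g ∈ G with dotR φ g = 0, g, subset_dualCone_dualCone _
    (hδ ▸ Submodule.sum_mem _ fun g hg => subset_hull (Finset.mem_filter.mp hg).1), ?_⟩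
  ext ψ
  refine and_congr_right fun hψ => ?_
  rw [mem_perpSet_face_iff hδ hφ, dotR_comm, dotR_eq_dotProduct, dotProduct_sum]
  simp only [← dotR_eq_dotProduct]
  rw [Finset.sum_eq_zero_iff_of_nonneg fun g hg => hψ g (hGδ g (Finset.mem_filter.mp hg).1)]
  simp only [Finset.mem_filter, and_imp]

/-- The sum of one functional per generator, chosen positive on it whenever possible, is a
relative interior point of `K`. -/
lemma exists_mem_forall_dotR_eq_zero {K : Set (Fin n → ℝ)} (hK0 : 0 ∈ K)
    (hKadd : ∀ φ ∈ K, ∀ ψ ∈ K, φ + ψ ∈ K) (hKG : ∀ ψ ∈ K, ∀ g ∈ G, 0 ≤ dotR ψ g) :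
    ∃ φ ∈ K, ∀ g ∈ G, dotR φ g = 0 → ∀ ψ ∈ K, dotR ψ g = 0 := by
  have hchoice : ∀ g : Fin n → ℝ, ∃ ψ ∈ K, (∃ ψ' ∈ K, 0 < dotR ψ' g) → 0 < dotR ψ g := by
    intro g
    by_cases h : ∃ ψ' ∈ K, 0 < dotR ψ' g
    · obtain ⟨ψ', hψ', hpos⟩ := h
      exact ⟨ψ', hψ', fun _ => hpos⟩
    · exact ⟨0, hK0, fun h' => absurd h' h⟩
  choose ψ hψK hψpos using hchoice
  refine ⟨∑ g ∈ G, ψ g, Finset.sum_induction _ (· ∈ K) (fun a b ha hb => hKadd a ha b hb) hK0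
    fun g _ => hψK g, ?_⟩
  intro g hg hφg ψ' hψ'
  refine le_antisymm (not_lt.mp fun hpos => ?_) (hKG ψ' hψ' g hg)
  have hle : dotR (ψ g) g ≤ dotR (∑ g ∈ G, ψ g) g := by
    rw [dotR_eq_dotProduct (∑ g ∈ G, ψ g), sum_dotProduct]
    exact Finset.single_le_sum (fun g' _ => hKG _ (hψK g') g hg) hg
  linarith [hψpos g ⟨ψ', hψ', hpos⟩]

lemma surjOn_dualCone_inter_perpSet (hδ : δ = hull ℝ (G : Set (Fin n → ℝ))) :
    Set.SurjOn (fun σ => dualCone δ ∩ perpSet σ) (facesOf δ) (facesOf (dualCone δ)) := by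
  rintro _ ⟨w, hw, rfl⟩
  have hwδ : w ∈ δ := hδ ▸ dualCone_dualCone_subset_of_isClosed (isClosed_hull_finset G) (hδ ▸ hw)
  set K := {ψ ∈ dualCone δ | dotR w ψ = 0}
  have hK0 : 0 ∈ K := ⟨fun v _ => (zero_dotProduct v).ge, dotProduct_zero w⟩
  have hKadd : ∀ φ ∈ K, ∀ ψ ∈ K, φ + ψ ∈ K := by
    rintro φ ⟨hφ, hφw⟩ ψ ⟨hψ, hψw⟩
    refine ⟨fun v hv => ?_, ?_⟩
    · simpa only [dotR_eq_dotProduct, add_dotProduct] using add_nonneg (hφ v hv) (hψ v hv)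
    · simp only [dotR_eq_dotProduct, dotProduct_add] at hφw hψw ⊢
      rw [hφw, hψw, add_zero]
  obtain ⟨φ, ⟨hφ, hφw⟩, hφK⟩ := exists_mem_forall_dotR_eq_zero hK0 hKadd
    fun ψ hψ g hg => hψ.1 g (hδ ▸ subset_hull hg)
  refine ⟨_, ⟨φ, hφ, rfl⟩, Set.ext fun ψ => ⟨fun hψ => ⟨hψ.1, ?_⟩, fun hψ => ⟨hψ.1, ?_⟩⟩⟩
  · exact dotR_comm w ψ ▸ hψ.2 w ⟨hwδ, dotR_comm φ w ▸ hφw⟩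
  · exact (mem_perpSet_face_iff hδ hφ).mpr fun g hg hφg => hφK g hg hφg ψ hψ

end FinitelyGenerated

theorem stmt18_general (n : ℕ) (δ : Set (Fin n → ℝ))
    (G : Finset (Fin n → ℝ))
    (hgen : δ = {x | ∃ c : (Fin n → ℝ) → ℝ, (∀ g, 0 ≤ c g) ∧ x = ∑ g ∈ G, c g • g})
    (τ : Set (Fin n → ℝ)) (hτ : τ ∈ facesOf δ) :
    dualCone {x | ∃ u' ∈ δ, ∃ u ∈ τ, x = u' - u} = dualCone δ ∩ perpSet τ ∧
    Set.BijOn (fun σ => dualCone δ ∩ perpSet σ) (facesOf δ) (facesOf (dualCone δ)) ∧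
    (∀ τ₁ ∈ facesOf δ, ∀ τ₂ ∈ facesOf δ, τ₁ ⊆ τ₂ →
      dualCone δ ∩ perpSet τ₂ ⊆ dualCone δ ∩ perpSet τ₁) := by
  rw [← coe_hull_finset] at hgen
  have hτ0 : (0 : Fin n → ℝ) ∈ τ := zero_mem_of_mem_facesOf (hgen ▸ zero_mem _) hτ
  have hsub : {x | ∃ u' ∈ δ, ∃ u ∈ τ, x = u' - u} = δ - τ := by
    ext x
    simp only [Set.mem_sub, Set.mem_ofPred_eq, eq_comm]
  refine ⟨?_, ⟨mapsTo_dualCone_inter_perpSet hgen, injOn_dualCone_inter_perpSet δ,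
    surjOn_dualCone_inter_perpSet hgen⟩,
    fun τ₁ _ τ₂ _ h => Set.inter_subset_inter_right _ (perpSet_anti h)⟩
  rw [hsub]
  exact dualCone_sub_eq_inter_perpSet hτ0 (subset_of_mem_facesOf hτ)

/-- For a full-dimensional rational polyhedral cone δ ⊆ ℝⁿ and a face τ of δ, the
dual cone of cone_δ(τ) (the cone generated by differences u′ − u, u′ ∈ δ, u ∈ τ)
equals δ̌ ∩ τ^⊥, and τ ↦ δ̌ ∩ τ^⊥ is an inclusion-reversing bijection from the
faces of δ onto the faces of δ̌. -/
theorem stmt18 (n : ℕ) (δ : Set (Fin n → ℝ))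
    (G : Finset (Fin n → ℝ))
    (hrat : ∀ g ∈ G, ∀ i, ∃ q : ℚ, g i = (q : ℝ))
    (hgen : δ = {x | ∃ c : (Fin n → ℝ) → ℝ, (∀ g, 0 ≤ c g) ∧ x = ∑ g ∈ G, c g • g})
    (hfull : Submodule.span ℝ δ = ⊤)
    (τ : Set (Fin n → ℝ)) (hτ : τ ∈ facesOf δ) :
    dualCone {x | ∃ u' ∈ δ, ∃ u ∈ τ, x = u' - u} = dualCone δ ∩ perpSet τ ∧
    Set.BijOn (fun σ => dualCone δ ∩ perpSet σ) (facesOf δ) (facesOf (dualCone δ)) ∧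
    (∀ τ₁ ∈ facesOf δ, ∀ τ₂ ∈ facesOf δ, τ₁ ⊆ τ₂ →
      dualCone δ ∩ perpSet τ₂ ⊆ dualCone δ ∩ perpSet τ₁) :=
  stmt18_general n δ G hgen τ hτ
end
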